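/- Let A be an annihilator nilpotent skew brace. Then T₊(A) is an ideal of A, and the quotient skew brace A/T₊(A) has no nonzero element of finite additive order. -/

import Mathlib

/-- A skew brace: a type with two group structures `(B,+)` and `(B,∘)`
(the multiplicative group is written with `*`) sharing the same underlying set,
such that `a ∘ (b + c) = a ∘ b - a + a ∘ c`. -/
class SkewBrace (B : Type*) extends AddGroup B, Group B where
  circ_add : ∀ a b c : B, a * (b + c) = a * b - a + a * c

namespace SkewBrace

variable {B : Type*} [SkewBrace B]

/-- `lam a b = -a + a ∘ b`, i.e. `λ_a(b)`. -/
def lam (a b : B) : B := -a + a * b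

/-- `a * b` (the star operation) `= λ_a(b) - b = -a + a ∘ b - b`. -/
def starOp (a b : B) : B := -a + a * b - b

/-- `X * Y` : the additive subgroup generated by all `x * y`, `x ∈ X`, `y ∈ Y`,
regarded as a set. -/
def starSpan (X Y : Set B) : Set B :=
  (AddSubgroup.closure {z : B | ∃ x ∈ X, ∃ y ∈ Y, z = starOp x y} : AddSubgroup B)

/-- `[X,Y]₊` : the additive subgroup generated by all additive commutators
`x + y - x - y`, `x ∈ X`, `y ∈ Y`, regarded as a set. -/
def addCommSpan (X Y : Set B) : Set B :=
  (AddSubgroup.closure {z : B | ∃ x ∈ X, ∃ y ∈ Y, z = x + y - x - y} : AddSubgroup B)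

/-- A sub skew brace: a subset containing `0` and closed under both group
operations and both inverses. -/
def IsSubSkewBrace (S : Set B) : Prop :=
  0 ∈ S ∧ (∀ a ∈ S, ∀ b ∈ S, a + b ∈ S) ∧ (∀ a ∈ S, -a ∈ S) ∧
    (∀ a ∈ S, ∀ b ∈ S, a * b ∈ S) ∧ (∀ a ∈ S, a⁻¹ ∈ S)

/-- An ideal: a sub skew brace that is normal in `(B,+)` and in `(B,∘)` and
invariant under all `λ_a`. -/
def IsIdeal (S : Set B) : Prop :=
  IsSubSkewBrace S ∧ (∀ a : B, ∀ i ∈ S, a + i - a ∈ S) ∧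
    (∀ a : B, ∀ i ∈ S, a * i * a⁻¹ ∈ S) ∧ (∀ a : B, ∀ i ∈ S, lam a i ∈ S)

/-- The annihilator `Ann(B) = {x | x∘a = a∘x = x+a = a+x for all a}`. -/
def annSet (B : Type*) [SkewBrace B] : Set B :=
  {x | ∀ a : B, x * a = a * x ∧ x * a = x + a ∧ x + a = a + x}

/-- The annihilator series: `Ann₀(B) = 0` and `Ann_{n+1}(B)` is the preimage of
`Ann(B/Annₙ(B))` under the quotient map; membership is expressed via coset
equalities modulo `Annₙ(B)`. -/
def annSeries (B : Type*) [SkewBrace B] : ℕ → Set B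
  | 0 => {0}
  | n + 1 => {x | ∀ a : B,
      x * a - a * x ∈ annSeries B n ∧
      x * a - (x + a) ∈ annSeries B n ∧
      (x + a) - (a + x) ∈ annSeries B n}

/-- `B` is annihilator nilpotent if `Annₙ(B) = B` for some `n`. -/
def AnnNilpotent (B : Type*) [SkewBrace B] : Prop :=
  ∃ n : ℕ, annSeries B n = Set.univ

/-- `leftPow B n` is `B^{n+1}`: `B¹ = B`, `B^{n+1} = B * Bⁿ`. -/
def leftPow (B : Type*) [SkewBrace B] : ℕ → Set B
  | 0 => Set.univ
  | n + 1 => starSpan Set.univ (leftPow B n)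

/-- `rightPow B n` is `B⁽ⁿ⁺¹⁾`: `B⁽¹⁾ = B`, `B⁽ⁿ⁺¹⁾ = B⁽ⁿ⁾ * B`. -/
def rightPow (B : Type*) [SkewBrace B] : ℕ → Set B
  | 0 => Set.univ
  | n + 1 => starSpan (rightPow B n) Set.univ

/-- `B` is left nilpotent if `Bⁿ = 0` for some `n ≥ 1`. -/
def LeftNilpotent (B : Type*) [SkewBrace B] : Prop :=
  ∃ n : ℕ, leftPow B n = ({0} : Set B)

/-- `B` is right nilpotent if `B⁽ⁿ⁾ = 0` for some `n ≥ 1`. -/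
def RightNilpotent (B : Type*) [SkewBrace B] : Prop :=
  ∃ n : ℕ, rightPow B n = ({0} : Set B)

/-- `strongPow B n` is `B^[n+1]`: `B^[1] = B`, and `B^[n+1]` is the additive
subgroup generated by `⋃_{i=1}^{n} B^[i] * B^[n+1-i]`. -/
def strongPow (B : Type*) [SkewBrace B] : ℕ → Set B
  | 0 => Set.univ
  | n + 1 => (AddSubgroup.closure (⋃ j : Fin (n + 1),
      {z : B | ∃ x ∈ strongPow B j.1, ∃ y ∈ strongPow B (n - j.1), z = starOp x y}) :
        AddSubgroup B)
  decreasing_by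
  · exact j.isLt
  · omega

/-- `B` is strongly nilpotent if `B^[n] = 0` for some `n ≥ 1`. -/
def StronglyNilpotent (B : Type*) [SkewBrace B] : Prop :=
  ∃ n : ℕ, strongPow B n = ({0} : Set B)

/-- `gammaAux B n` is `Γ_[n+1](B)`: `Γ_[1](B) = B` and, for `n ≥ 2`, `Γ_[n](B)` is
the additive subgroup generated by the sets `Γ_[i](B) * Γ_[n-i](B)` and
`[Γ_[i](B), Γ_[n-i](B)]₊` for `1 ≤ i ≤ n-1`. -/
def gammaAux (B : Type*) [SkewBrace B] : ℕ → Set B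
  | 0 => Set.univ
  | n + 1 => (AddSubgroup.closure (⋃ j : Fin (n + 1),
      {z : B | ∃ x ∈ gammaAux B j.1, ∃ y ∈ gammaAux B (n - j.1),
        z = starOp x y ∨ z = x + y - x - y}) : AddSubgroup B)
  decreasing_by
  · exact j.isLt
  · omega

/-- `Γ_[n](B)` for `n ≥ 1` (one-based indexing as in the paper). -/
def gammaBr (B : Type*) [SkewBrace B] (n : ℕ) : Set B := gammaAux B (n - 1)

/-- `B` is finitely generated as a skew brace: there is a finite subset whose
smallest containing sub skew brace is `B` itself. -/
def SBFinitelyGenerated (B : Type*) [SkewBrace B] : Prop :=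
  ∃ S : Set B, S.Finite ∧ ∀ T : Set B, IsSubSkewBrace T → S ⊆ T → T = Set.univ

/-- `B` satisfies the ascending chain condition on sub skew braces. -/
def ACCSubSkewBrace (B : Type*) [SkewBrace B] : Prop :=
  ∀ f : ℕ → Set B, (∀ n, IsSubSkewBrace (f n)) → (∀ n, f n ⊆ f (n + 1)) →
    ∃ N : ℕ, ∀ n, N ≤ n → f n = f N


end SkewBrace

/-!
Every `Annₖ(A)` is an ideal, so `∘` is compatible with congruence modulo `Annₖ(A)`, and modulo
`Annₖ(A)` the elements `x ∈ Annₖ₊₁(A)` are central in both groups and satisfy `x ∘ a ≡ x + a`.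
Hence the annihilator series lies below the upper central series of `(A,+)`: this group is
nilpotent, so its elements of finite order form a normal subgroup `T₊`, which is closed under `∘`
since `a ∘ b = a + λ_a(b)`. Invariance under `∘`-conjugation comes from
`a ∘ i ∘ a⁻¹ = a + λ_a(i + i ⋆ a⁻¹) - a` and two inductions along the annihilator series:
for `x ∈ Annₖ₊₁(A)` one has `x^m ≡ m • x` modulo `Annₖ(A)`, so elements of `T₊` have finite
multiplicative order; and for `w` of finite multiplicative order, `w^j ⋆ b ≡ j • (w ⋆ b)` modulo
`T₊`, so `w ⋆ b ∈ T₊`.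
-/
section NilpotentTorsion

open Subgroup
open scoped commutatorElement

variable {G : Type*} [Group G]

@[to_additive]
theorem isOfFinOrder_of_mem_closure_of_subset_center {s : Set G} (hs : s ⊆ center G)
    (hfin : ∀ g ∈ s, IsOfFinOrder g) {x : G} (hx : x ∈ closure s) : IsOfFinOrder x := by
  have hcen : closure s ≤ center G := (closure_le _).mpr hs
  induction hx using closure_induction with
  | mem g hg => exact hfin g hg
  | one => exact IsOfFinOrder.one
  | mul a b ha _ hfa hfb =>
    exact Commute.isOfFinOrder_mul (mem_center_iff.mp (hcen ha) b).symm hfa hfb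
  | inv a _ hfa => exact hfa.inv

@[to_additive]
def commutatorElementLeftHom (p : G) (hp : ∀ g, ⁅p, g⁆ ∈ center G) : G →* G where
  toFun g := ⁅p, g⁆
  map_one' := commutatorElement_one_right p
  map_mul' a b := by
    rw [commutatorElement_mul_right_eq_mul_conj, mul_assoc _ a, mem_center_iff.mp (hp b) a,
      mul_assoc, mul_assoc, mul_inv_cancel, mul_one]

/- The last nontrivial term `N` of the lower central series is central and generated by
commutators `⁅p, q⁆`, which are multiplicative in `q`; hence `N` is generated by central elements
of finite order, and induction applies to `G ⧸ N`. -/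
@[to_additive]
theorem isOfFinOrder_of_closure_eq_top_of_lowerCentralSeries_eq_bot {n : ℕ}
    (hgen : closure {g : G | IsOfFinOrder g} = ⊤)
    (hn : (⊤ : Subgroup G).lowerCentralSeries n = ⊥) (x : G) : IsOfFinOrder x := by
  induction n generalizing G with
  | zero =>
    have hx : x ∈ (⊥ : Subgroup G) := hn ▸ mem_top x
    rw [mem_bot.mp hx]
    exact IsOfFinOrder.one
  | succ n ih =>
    let N := (⊤ : Subgroup G).lowerCentralSeries n
    have hNcen : N ≤ center G := by
      have := commutator_eq_bot_iff_le_centralizer.mp hn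
      rwa [coe_top, centralizer_univ] at this
    have hNle : N ≤ closure {g : G | IsOfFinOrder g ∧ g ∈ center G} := by
      cases n with
      | zero =>
        change ⊤ ≤ _
        rw [← hgen]
        exact closure_mono fun g hg => ⟨hg, hNcen (mem_top g)⟩
      | succ m =>
        refine commutator_le.mpr fun p hp q _ => ?_
        have hpcen : ∀ g, ⁅p, g⁆ ∈ center G :=
          fun g => hNcen (commutator_mem_commutator hp (mem_top g))
        let φ := commutatorElementLeftHom p hpcen
        have hq : φ q ∈ (closure {g : G | IsOfFinOrder g}).map φ :=
          mem_map_of_mem φ (hgen ▸ mem_top q)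
        rw [MonoidHom.map_closure] at hq
        refine closure_mono ?_ hq
        rintro _ ⟨t, ht, rfl⟩
        exact ⟨φ.isOfFinOrder ht, hpcen t⟩
    have hQgen : closure {g : G ⧸ N | IsOfFinOrder g} = ⊤ := by
      refine eq_top_iff.mpr fun q _ => ?_
      obtain ⟨g, rfl⟩ := QuotientGroup.mk'_surjective N q
      have hg := mem_map_of_mem (QuotientGroup.mk' N) (hgen ▸ mem_top g)
      rw [MonoidHom.map_closure] at hg
      exact closure_mono (by rintro _ ⟨t, ht, rfl⟩; exact (QuotientGroup.mk' N).isOfFinOrder ht) hg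
    have hQn : (⊤ : Subgroup (G ⧸ N)).lowerCentralSeries n = ⊥ := by
      rw [← map_top_of_surjective _ (QuotientGroup.mk'_surjective N), ← map_lowerCentralSeries,
        Subgroup.map_eq_bot_iff, QuotientGroup.ker_mk']
    obtain ⟨r, hr, hxr⟩ := (ih hQgen hQn (x : G ⧸ N)).exists_pow_eq_one
    rw [← QuotientGroup.mk_pow, QuotientGroup.eq_one_iff] at hxr
    have hxr_fin : IsOfFinOrder (x ^ r) :=
      isOfFinOrder_of_mem_closure_of_subset_center (fun g hg => hg.2) (fun g hg => hg.1)
        (hNle hxr)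
    exact hxr_fin.of_pow hr.ne'

@[to_additive]
theorem Group.IsNilpotent.isOfFinOrder_mul [Group.IsNilpotent G] {x y : G}
    (hx : IsOfFinOrder x) (hy : IsOfFinOrder y) : IsOfFinOrder (x * y) := by
  let H := closure {g : G | IsOfFinOrder g}
  have hgen : closure {h : H | IsOfFinOrder h} = ⊤ := by
    rw [eq_top_iff, ← closure_closure_coe_preimage]
    exact closure_mono fun h hh => Submonoid.isOfFinOrder_coe.mp hh
  obtain ⟨n, hn⟩ :=
    Subgroup.nilpotent_iff_lowerCentralSeries.mp (inferInstance : Group.IsNilpotent H)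
  have hxy := isOfFinOrder_of_closure_eq_top_of_lowerCentralSeries_eq_bot hgen hn
    ⟨x * y, mul_mem (subset_closure hx) (subset_closure hy)⟩
  exact Submonoid.isOfFinOrder_coe.mpr hxy

@[to_additive]
def Group.IsNilpotent.torsion (G : Type*) [Group G] [Group.IsNilpotent G] : Subgroup G where
  carrier := {g | IsOfFinOrder g}
  one_mem' := IsOfFinOrder.one
  mul_mem' := Group.IsNilpotent.isOfFinOrder_mul
  inv_mem' := IsOfFinOrder.inv

@[to_additive]
instance Group.IsNilpotent.torsion_normal (G : Type*) [Group G] [Group.IsNilpotent G] :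
    (Group.IsNilpotent.torsion G).Normal :=
  ⟨fun _ hx g => (MulAut.conj g).toMonoidHom.isOfFinOrder hx⟩

namespace SkewBrace

section

variable {B : Type*} [SkewBrace B]

theorem one_eq_zero : (1 : B) = 0 := by
  have h := circ_add (1 : B) 0 0
  rw [add_zero, one_mul, add_zero, zero_sub, eq_comm, neg_eq_zero] at h
  exact h

theorem lam_add (a b c : B) : lam a (b + c) = lam a b + lam a c := by
  simp only [lam, circ_add, sub_eq_add_neg, add_assoc]

def lamHom (a : B) : B →+ B := AddMonoidHom.mk' (lam a) (lam_add a)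

@[simp]
theorem lamHom_apply (a b : B) : lamHom a b = lam a b := rfl

theorem lam_neg (a b : B) : lam a (-b) = -lam a b := map_neg (lamHom a) b

theorem lam_sub (a b c : B) : lam a (b - c) = lam a b - lam a c := map_sub (lamHom a) b c

@[simp]
theorem add_lam (a b : B) : a + lam a b = a * b := add_neg_cancel_left a (a * b)

theorem lam_mul (a b c : B) : lam (a * b) c = lam a (lam b c) := by
  have h := circ_add a b (lam b c)
  rw [add_lam, ← mul_assoc] at h
  change -(a * b) + a * b * c = -a + a * lam b c
  rw [h, sub_eq_add_neg, add_assoc, neg_add_cancel_left]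

theorem lam_one (c : B) : lam 1 c = c := by
  rw [lam, one_mul, one_eq_zero, neg_zero, zero_add]

theorem lam_lam_inv (a c : B) : lam a (lam a⁻¹ c) = c := by
  rw [← lam_mul, mul_inv_cancel, lam_one]

theorem lam_eq_starOp_add (a b : B) : lam a b = starOp a b + b :=
  (sub_add_cancel _ _).symm

theorem starOp_one_left (b : B) : starOp 1 b = 0 := by
  rw [starOp, one_mul, one_eq_zero, neg_zero, zero_add, sub_self]

theorem starOp_mul_left (u v b : B) : starOp (u * v) b = lam u (starOp v b) + starOp u b := by
  rw [starOp, ← lam, lam_mul, lam_eq_starOp_add v, lam_add, add_sub_assoc]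
  rfl

theorem inv_eq_lam_neg (a : B) : a⁻¹ = lam a⁻¹ (-a) := by
  rw [lam_neg, lam, inv_mul_cancel, one_eq_zero, add_zero, neg_neg]

theorem mul_mul_inv_eq (a i : B) : a * i * a⁻¹ = a + lam a (i + starOp i a⁻¹) - a := by
  have h : -a = lam a a⁻¹ := by rw [lam, mul_inv_cancel, one_eq_zero, add_zero]
  rw [sub_eq_add_neg, h, add_assoc, ← lam_add, add_assoc, ← lam_eq_starOp_add, add_lam i,
    add_lam, mul_assoc]

/-- The preimage of `Ann(B/I)` in `B`. -/
def relAnn (I : Set B) : Set B :=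
  {x | ∀ a : B, x * a - a * x ∈ I ∧ x * a - (x + a) ∈ I ∧ (x + a) - (a + x) ∈ I}

theorem annSeries_succ (k : ℕ) : annSeries B (k + 1) = relAnn (annSeries B k) := rfl

theorem relAnn_mono {I J : Set B} (h : I ⊆ J) : relAnn I ⊆ relAnn J :=
  fun _ hx a => ⟨h (hx a).1, h (hx a).2.1, h (hx a).2.2⟩

section RelAnn

open QuotientAddGroup

variable {I : AddSubgroup B} [I.Normal] {x : B}

theorem mem_relAnn_iff : x ∈ relAnn (I : Set B) ↔ ∀ a : B,
    ((x * a : B) : B ⧸ I) = x + a ∧ ((a * x : B) : B ⧸ I) = x + a ∧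
      AddCommute (x : B ⧸ I) a := by
  refine forall_congr' fun a => ?_
  simp only [SetLike.mem_coe, ← eq_iff_sub_mem, mk_add, AddCommute]
  constructor
  · rintro ⟨h1, h2, h3⟩
    exact ⟨h2, h1 ▸ h2, h3⟩
  · rintro ⟨h1, h2, h3⟩
    exact ⟨h1.trans h2.symm, h1, h3⟩

theorem mk_mul_left_of_mem_relAnn (hx : x ∈ relAnn (I : Set B)) (a : B) :
    ((x * a : B) : B ⧸ I) = x + a :=
  (mem_relAnn_iff.mp hx a).1

theorem mk_mul_right_of_mem_relAnn (hx : x ∈ relAnn (I : Set B)) (a : B) :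
    ((a * x : B) : B ⧸ I) = x + a :=
  (mem_relAnn_iff.mp hx a).2.1

theorem addCommute_of_mem_relAnn (hx : x ∈ relAnn (I : Set B)) (a : B) :
    AddCommute (x : B ⧸ I) a :=
  (mem_relAnn_iff.mp hx a).2.2

theorem mk_pow_of_mem_relAnn (hx : x ∈ relAnn (I : Set B)) (j : ℕ) :
    ((x ^ j : B) : B ⧸ I) = j • (x : B ⧸ I) := by
  induction j with
  | zero => rw [pow_zero, one_eq_zero, zero_nsmul, mk_zero]
  | succ j ih => rw [pow_succ', mk_mul_left_of_mem_relAnn hx, ih, succ_nsmul']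

theorem starOp_mem_of_mem_relAnn {c : B} (hc : c ∈ relAnn (I : Set B)) (w : B) :
    starOp w c ∈ I := by
  rw [← eq_zero_iff, starOp, mk_sub, mk_add, mk_neg, mk_mul_right_of_mem_relAnn hc,
    (addCommute_of_mem_relAnn hc w).eq, neg_add_cancel_left, sub_self]

theorem mk_inv_of_mem_relAnn (hx : x ∈ relAnn (I : Set B)) : ((x⁻¹ : B) : B ⧸ I) = -x := by
  rw [eq_comm, neg_eq_iff_add_eq_zero, ← mk_mul_left_of_mem_relAnn hx, mul_inv_cancel,
    one_eq_zero, mk_zero]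

theorem inv_mem_relAnn (hx : x ∈ relAnn (I : Set B)) : x⁻¹ ∈ relAnn (I : Set B) := by
  have hinv := mk_inv_of_mem_relAnn hx
  refine mem_relAnn_iff.mpr fun a => ⟨?_, ?_, ?_⟩
  · rw [hinv, eq_neg_add_iff_add_eq, ← mk_mul_left_of_mem_relAnn hx, mul_inv_cancel_left]
  · rw [hinv, eq_neg_add_iff_add_eq, ← mk_mul_right_of_mem_relAnn hx, inv_mul_cancel_right]
  · rw [hinv]
    exact (addCommute_of_mem_relAnn hx a).neg_left

variable (hlam : ∀ a : B, ∀ i ∈ I, lam a i ∈ I)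
include hlam

theorem mk_mul_congr_left (c : B) {u v : B} (h : (u : B ⧸ I) = v) :
    ((c * u : B) : B ⧸ I) = (c * v : B) := by
  have hl : ((lam c u : B) : B ⧸ I) = lam c v := by
    rw [eq_iff_sub_mem, ← lam_sub]
    exact hlam c _ (eq_iff_sub_mem.mp h)
  rw [← add_lam c u, ← add_lam c v, mk_add, mk_add, hl]

variable (hsub : (I : Set B) ⊆ relAnn I)
include hsub

-- Writing `u = v + i` as `v ∘ λ_{v⁻¹}(i)` reduces this to the left congruence.
theorem mk_mul_congr_right (c : B) {u v : B} (h : (u : B ⧸ I) = v) :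
    ((u * c : B) : B ⧸ I) = (v * c : B) := by
  have hi : lam v⁻¹ (-v + u) ∈ I := hlam _ _ (QuotientAddGroup.eq.mp h.symm)
  have hu : u = v * lam v⁻¹ (-v + u) := by rw [← add_lam, lam_lam_inv, add_neg_cancel_left]
  rw [hu, mul_assoc]
  refine mk_mul_congr_left hlam v ?_
  rw [mk_mul_left_of_mem_relAnn (hsub hi), (eq_zero_iff _).mpr hi, zero_add]

theorem mem_relAnn_of_mk_eq {u v : B} (h : (u : B ⧸ I) = v) (hv : v ∈ relAnn (I : Set B)) :
    u ∈ relAnn (I : Set B) := by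
  refine mem_relAnn_iff.mpr fun a => ⟨?_, ?_, ?_⟩
  · rw [mk_mul_congr_right hlam hsub a h, mk_mul_left_of_mem_relAnn hv, h]
  · rw [mk_mul_congr_left hlam a h, mk_mul_right_of_mem_relAnn hv, h]
  · rw [h]
    exact addCommute_of_mem_relAnn hv a

theorem mul_mem_relAnn {x y : B} (hx : x ∈ relAnn (I : Set B)) (hy : y ∈ relAnn (I : Set B)) :
    x * y ∈ relAnn (I : Set B) := by
  refine mem_relAnn_iff.mpr fun a => ⟨?_, ?_, ?_⟩
  · rw [mul_assoc, mk_mul_left_of_mem_relAnn hx, mk_mul_left_of_mem_relAnn hy,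
      mk_mul_left_of_mem_relAnn hx, add_assoc]
  · have hax : ((a * x : B) : B ⧸ I) = (x * a : B) := by
      rw [mk_mul_left_of_mem_relAnn hx, mk_mul_right_of_mem_relAnn hx]
    rw [← mul_assoc, mk_mul_congr_right hlam hsub y hax, mul_assoc, mk_mul_left_of_mem_relAnn hx,
      mk_mul_right_of_mem_relAnn hy, mk_mul_left_of_mem_relAnn hx, add_assoc]
  · rw [mk_mul_left_of_mem_relAnn hx]
    exact (addCommute_of_mem_relAnn hx a).add_left (addCommute_of_mem_relAnn hy a)

theorem add_mem_relAnn {x y : B} (hx : x ∈ relAnn (I : Set B)) (hy : y ∈ relAnn (I : Set B)) :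
    x + y ∈ relAnn (I : Set B) :=
  mem_relAnn_of_mk_eq hlam hsub (by rw [mk_add, mk_mul_left_of_mem_relAnn hx])
    (mul_mem_relAnn hlam hsub hx hy)

theorem neg_mem_relAnn (hx : x ∈ relAnn (I : Set B)) : -x ∈ relAnn (I : Set B) :=
  mem_relAnn_of_mk_eq hlam hsub (by rw [mk_neg, mk_inv_of_mem_relAnn hx]) (inv_mem_relAnn hx)

theorem add_add_neg_mem_relAnn (a : B) (hx : x ∈ relAnn (I : Set B)) :
    a + x + -a ∈ relAnn (I : Set B) :=
  mem_relAnn_of_mk_eq hlam hsub (by rw [mk_add, mk_add, mk_neg,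
    ← (addCommute_of_mem_relAnn hx a).eq, add_neg_cancel_right]) hx

theorem lam_mem_relAnn (a : B) (hx : x ∈ relAnn (I : Set B)) : lam a x ∈ relAnn (I : Set B) :=
  mem_relAnn_of_mk_eq hlam hsub (by rw [lam, mk_add, mk_neg, mk_mul_right_of_mem_relAnn hx,
    (addCommute_of_mem_relAnn hx a).eq, neg_add_cancel_left]) hx

end RelAnn

/-- Equivalent to `IsIdeal (I : Set B)`, in a form that propagates along the annihilator series. -/
structure IsBraceIdeal (I : AddSubgroup B) : Prop where
  normal : I.Normal
  lam_mem : ∀ a : B, ∀ i ∈ I, lam a i ∈ I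
  subset_relAnn : (I : Set B) ⊆ relAnn I

theorem IsBraceIdeal.exists_relAnn {I : AddSubgroup B} (hI : IsBraceIdeal I) :
    ∃ J : AddSubgroup B, (J : Set B) = relAnn I ∧ IsBraceIdeal J := by
  have := hI.normal
  let J : AddSubgroup B :=
    { carrier := relAnn I
      zero_mem' := hI.subset_relAnn I.zero_mem
      add_mem' := add_mem_relAnn hI.lam_mem hI.subset_relAnn
      neg_mem' := neg_mem_relAnn hI.lam_mem hI.subset_relAnn }
  refine ⟨J, rfl, ⟨⟨fun x hx a => add_add_neg_mem_relAnn hI.lam_mem hI.subset_relAnn a hx⟩,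
    fun a x hx => lam_mem_relAnn hI.lam_mem hI.subset_relAnn a hx, ?_⟩⟩
  exact relAnn_mono hI.subset_relAnn

theorem isBraceIdeal_bot : IsBraceIdeal (⊥ : AddSubgroup B) := by
  refine ⟨inferInstance, fun a i hi => ?_, fun i hi a => ?_⟩
  · rw [AddSubgroup.mem_bot.mp hi, ← lamHom_apply, map_zero]
    exact zero_mem _
  · have h₁ : (0 : B) * a = a := by rw [← one_eq_zero, one_mul]
    have h₂ : a * (0 : B) = a := by rw [← one_eq_zero, mul_one]
    simp [AddSubgroup.mem_bot.mp hi, h₁, h₂]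

theorem exists_isBraceIdeal_annSeries (k : ℕ) :
    ∃ I : AddSubgroup B, (I : Set B) = annSeries B k ∧ IsBraceIdeal I := by
  induction k with
  | zero => exact ⟨⊥, AddSubgroup.coe_bot, isBraceIdeal_bot⟩
  | succ k ih =>
    obtain ⟨I, hIk, hI⟩ := ih
    obtain ⟨J, hJ, hJI⟩ := hI.exists_relAnn
    exact ⟨J, by rw [hJ, hIk, annSeries_succ], hJI⟩

end

section Torsion

variable {A : Type*} [SkewBrace A]

theorem annSeries_subset_upperCentralSeries (k : ℕ) :
    annSeries A k ⊆ AddSubgroup.upperCentralSeries A k := by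
  induction k with
  | zero =>
    intro x hx
    rw [Set.mem_singleton_iff.mp hx]
    exact zero_mem _
  | succ k ih =>
    intro x hx
    refine AddSubgroup.mem_upperCentralSeries_succ_iff.mpr fun y => ih ?_
    have h := (hx y).2.2
    rwa [sub_eq_add_neg, neg_add_rev, ← add_assoc, ← addCommutatorElement_def] at h

theorem AnnNilpotent.isNilpotent_add (hA : AnnNilpotent A) : AddGroup.IsNilpotent A := by
  obtain ⟨n, hn⟩ := hA
  refine ⟨n, eq_top_iff.mpr fun x _ => annSeries_subset_upperCentralSeries n ?_⟩
  rw [hn]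
  trivial

theorem isOfFinAddOrder_mul [AddGroup.IsNilpotent A] {x y : A} (hx : IsOfFinAddOrder x)
    (hy : IsOfFinAddOrder y) : IsOfFinAddOrder (x * y) := by
  rw [← add_lam]
  exact AddGroup.IsNilpotent.isOfFinAddOrder_add hx ((lamHom x).isOfFinAddOrder hy)

theorem isOfFinAddOrder_pow [AddGroup.IsNilpotent A] {x : A} (hx : IsOfFinAddOrder x) (j : ℕ) :
    IsOfFinAddOrder (x ^ j) := by
  induction j with
  | zero =>
    rw [pow_zero, one_eq_zero]
    exact IsOfFinAddOrder.zero
  | succ j ih =>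
    rw [pow_succ]
    exact isOfFinAddOrder_mul ih hx

theorem AnnNilpotent.isOfFinOrder (hA : AnnNilpotent A) {x : A} (hx : IsOfFinAddOrder x) :
    IsOfFinOrder x := by
  have := hA.isNilpotent_add
  obtain ⟨n, hn⟩ := hA
  suffices h : ∀ k, ∀ x ∈ annSeries A k, IsOfFinAddOrder x → IsOfFinOrder x from
    h n x (hn ▸ Set.mem_univ x) hx
  intro k
  induction k with
  | zero =>
    intro x hx _
    rw [Set.mem_singleton_iff.mp hx, ← one_eq_zero]
    exact IsOfFinOrder.one
  | succ k ih =>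
    intro x hx hxfin
    obtain ⟨I, hIk, hI⟩ := exists_isBraceIdeal_annSeries (B := A) k
    have := hI.normal
    rw [annSeries_succ, ← hIk] at hx
    obtain ⟨m, hm, hmx⟩ := hxfin.exists_nsmul_eq_zero
    have hxm : x ^ m ∈ annSeries A k := by
      rw [← hIk, SetLike.mem_coe, ← QuotientAddGroup.eq_zero_iff, mk_pow_of_mem_relAnn hx,
        ← QuotientAddGroup.mk_nsmul, hmx, QuotientAddGroup.mk_zero]
    exact (ih _ hxm (isOfFinAddOrder_pow hxfin m)).of_pow hm.ne'

theorem AnnNilpotent.isOfFinAddOrder_starOp (hA : AnnNilpotent A) {w : A} (hw : IsOfFinOrder w)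
    (b : A) : IsOfFinAddOrder (starOp w b) := by
  have := hA.isNilpotent_add
  obtain ⟨n, hn⟩ := hA
  suffices h : ∀ k, ∀ w b : A, IsOfFinOrder w → starOp w b ∈ annSeries A k →
      IsOfFinAddOrder (starOp w b) from h n w b hw (hn ▸ Set.mem_univ _)
  intro k
  induction k with
  | zero =>
    intro w b _ hc
    rw [Set.mem_singleton_iff.mp hc]
    exact IsOfFinAddOrder.zero
  | succ k ih =>
    intro w b hw hc
    obtain ⟨I, hIk, hI⟩ := exists_isBraceIdeal_annSeries (B := A) k
    have := hI.normal
    rw [annSeries_succ, ← hIk] at hc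
    let T := AddGroup.IsNilpotent.torsion A
    have hfix : ∀ j : ℕ, ((lam (w ^ j) (starOp w b) : A) : A ⧸ T) = starOp w b := fun j => by
      rw [lam_eq_starOp_add, QuotientAddGroup.mk_add, (QuotientAddGroup.eq_zero_iff _).mpr,
        zero_add]
      exact ih _ _ hw.pow (hIk ▸ starOp_mem_of_mem_relAnn hc _)
    have hpow : ∀ j : ℕ, ((starOp (w ^ j) b : A) : A ⧸ T) = j • ((starOp w b : A) : A ⧸ T) := by
      intro j
      induction j with
      | zero => rw [pow_zero, starOp_one_left, zero_nsmul, QuotientAddGroup.mk_zero]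
      | succ j ihj =>
        rw [pow_succ, starOp_mul_left, QuotientAddGroup.mk_add, hfix, ihj, succ_nsmul']
    obtain ⟨r, hr, hwr⟩ := hw.exists_pow_eq_one
    have hr0 := hpow r
    rw [hwr, starOp_one_left, QuotientAddGroup.mk_zero, eq_comm, ← QuotientAddGroup.mk_nsmul,
      QuotientAddGroup.eq_zero_iff] at hr0
    exact IsOfFinAddOrder.of_nsmul hr0 hr.ne'

theorem AnnNilpotent.isOfFinAddOrder_mul_mul_inv (hA : AnnNilpotent A) (a : A) {i : A}
    (hi : IsOfFinAddOrder i) : IsOfFinAddOrder (a * i * a⁻¹) := by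
  have := hA.isNilpotent_add
  let T := AddGroup.IsNilpotent.torsion A
  rw [mul_mul_inv_eq, sub_eq_add_neg]
  refine (inferInstance : T.Normal).conj_mem _ ?_ a
  exact (lamHom a).isOfFinAddOrder
    (T.add_mem hi (hA.isOfFinAddOrder_starOp (hA.isOfFinOrder hi) a⁻¹))

end Torsion

/-- Proposition 4.2(2,3): in an annihilator nilpotent skew brace `A`, the set
`T₊(A)` of elements of finite additive order is an ideal of `A`, and the
quotient `A/T₊(A)` has no nonzero element of finite additive order (i.e. any
`x` whose coset has finite additive order already lies in `T₊(A)`). -/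
theorem stmt12 {A : Type*} [SkewBrace A] (hann : AnnNilpotent A) :
    IsIdeal {x : A | IsOfFinAddOrder x} ∧
    ∀ x : A, (∃ k : ℕ, 0 < k ∧ k • x ∈ {x : A | IsOfFinAddOrder x}) →
      IsOfFinAddOrder x := by
  have := hann.isNilpotent_add
  let T := AddGroup.IsNilpotent.torsion A
  refine ⟨⟨⟨T.zero_mem, fun _ ha _ hb => T.add_mem ha hb, fun _ ha => T.neg_mem ha,
    fun _ ha _ hb => isOfFinAddOrder_mul ha hb, fun a ha => ?_⟩,
    fun a i hi => ?_, fun a _ hi => hann.isOfFinAddOrder_mul_mul_inv a hi,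
    fun a _ hi => (lamHom a).isOfFinAddOrder hi⟩, ?_⟩
  · show IsOfFinAddOrder a⁻¹
    rw [inv_eq_lam_neg]
    exact (lamHom _).isOfFinAddOrder (T.neg_mem ha)
  · rw [sub_eq_add_neg]
    exact (inferInstance : T.Normal).conj_mem i hi a
  · rintro x ⟨k, hk, hkx⟩
    exact hkx.of_nsmul hk.ne'

end SkewBrace
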